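/- Let ε < 0 be a real constant. Then the function u(t,x) = −2√(-10ε)·(3·tanh(x + 24εt)² − 2) satisfies the equation u_t + u² u_x + ε u_{xxxxx} = 0 for all (t,x) ∈ ℝ². -/

import Mathlib

/-!
Every derivative of a polynomial in `tanh` is again a polynomial in `tanh`, because
`tanh' = 1 - tanh²`. So with `τ = tanh (x + 24 ε t)` all three terms of the equation are
polynomials in `τ`, and they cancel once `(-2 √(-10 ε))² = -40 ε`.
-/

open Polynomial Real

theorem Real.hasDerivAt_tanh (x : ℝ) : HasDerivAt tanh (1 - tanh x ^ 2) x := by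
  have h := (hasDerivAt_sinh x).div (hasDerivAt_cosh x) (cosh_pos x).ne'
  rw [show sinh / cosh = tanh from funext fun y => (tanh_eq_sinh_div_cosh y).symm] at h
  refine h.congr_deriv ?_
  rw [tanh_eq_sinh_div_cosh]
  field_simp

/-- `d/dx P(tanh x) = (derivTanh P)(tanh x)`. -/
noncomputable def derivTanh (P : ℝ[X]) : ℝ[X] := derivative P * (1 - X ^ 2)

theorem hasDerivAt_eval_tanh (P : ℝ[X]) (x : ℝ) :
    HasDerivAt (fun x => P.eval (tanh x)) ((derivTanh P).eval (tanh x)) x := by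
  simpa [derivTanh, Function.comp_def] using (P.hasDerivAt (tanh x)).comp x (hasDerivAt_tanh x)

theorem hasDerivAt_eval_tanh_add_mul (P : ℝ[X]) (a k x : ℝ) :
    HasDerivAt (fun x => P.eval (tanh (a + k * x)))
      (k * (derivTanh P).eval (tanh (a + k * x))) x := by
  have h := (hasDerivAt_eval_tanh P (a + k * x)).comp x
    (((hasDerivAt_id x).const_mul k).const_add a)
  simpa [mul_comm, Function.comp_def] using h

theorem deriv_eval_tanh_add (P : ℝ[X]) (a : ℝ) :
    deriv (fun x => P.eval (tanh (x + a))) = fun x => (derivTanh P).eval (tanh (x + a)) := by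
  funext x
  simpa [add_comm] using (hasDerivAt_eval_tanh_add_mul P a 1 x).deriv

theorem iteratedDeriv_eval_tanh_add (n : ℕ) (P : ℝ[X]) (a : ℝ) :
    iteratedDeriv n (fun x => P.eval (tanh (x + a))) =
      fun x => (derivTanh^[n] P).eval (tanh (x + a)) := by
  induction n generalizing P with
  | zero => simp
  | succ n ih => rw [iteratedDeriv_succ', deriv_eval_tanh_add, ih, Function.iterate_succ_apply]

theorem derivTanh_C_mul_three_X_sq_sub_two (c : ℝ) :
    derivTanh (C c * (3 * X ^ 2 - 2)) = C c * (6 * X - 6 * X ^ 3) := by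
  simp [derivTanh]
  ring

theorem derivTanh_iterate_five_C_mul_three_X_sq_sub_two (c : ℝ) :
    derivTanh^[5] (C c * (3 * X ^ 2 - 2)) =
      C c * (816 * X - 3696 * X ^ 3 + 5040 * X ^ 5 - 2160 * X ^ 7) := by
  simp [Function.iterate_succ_apply', derivTanh]
  ring

/-- Travelling-wave solution (with `−` sign) of `u_t + u² u_x + ε u_{xxxxx} = 0`, `ε < 0`. -/
theorem stmt_2 (ε : ℝ) (hε : ε < 0)
    (u : ℝ → ℝ → ℝ)
    (hu : ∀ t x : ℝ, u t x =
      -2 * Real.sqrt (-10 * ε) * (3 * (Real.tanh (x + 24 * ε * t)) ^ 2 - 2)) :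
    ∀ t x : ℝ,
      deriv (fun s => u s x) t + (u t x) ^ 2 * deriv (fun y => u t y) x
        + ε * iteratedDeriv 5 (fun y => u t y) x = 0 := by
  intro t x
  set c := -2 * √(-10 * ε)
  have hc : c ^ 2 = -40 * ε := by
    rw [mul_pow, sq_sqrt (by linarith)]
    ring
  clear_value c
  set P : ℝ[X] := C c * (3 * X ^ 2 - 2)
  have hP : ∀ s y, u s y = P.eval (tanh (y + 24 * ε * s)) := fun s y => by simp [P, hu]
  have hdt : deriv (fun s => u s x) t =
      24 * ε * (derivTanh P).eval (tanh (x + 24 * ε * t)) := by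
    simp only [hP]
    exact (hasDerivAt_eval_tanh_add_mul P x (24 * ε) t).deriv
  have hdx : deriv (fun y => u t y) x = (derivTanh P).eval (tanh (x + 24 * ε * t)) := by
    simp only [hP, deriv_eval_tanh_add]
  have hd5 : iteratedDeriv 5 (fun y => u t y) x =
      (derivTanh^[5] P).eval (tanh (x + 24 * ε * t)) := by
    simp only [hP, iteratedDeriv_eval_tanh_add]
  rw [hdt, hdx, hd5, derivTanh_iterate_five_C_mul_three_X_sq_sub_two,
    derivTanh_C_mul_three_X_sq_sub_two, hP]
  generalize tanh (x + 24 * ε * t) = τ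
  simp only [P, eval_mul, eval_C, eval_sub, eval_add, eval_pow, eval_X, eval_ofNat]
  linear_combination (c * (3 * τ ^ 2 - 2) ^ 2 * (6 * τ - 6 * τ ^ 3)) * hc
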